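/- arXiv:2501.11188 — 3 statements merged into one kernel-verified Lean document; each statement's English description precedes it below -/
import Mathlib

section
/- Let A ∈ ℝ^{3×3} be symmetric positive definite and R ∈ SO(3). Then tr(A(I₃ - R)) ≥ 0, with equality if and only if R = I₃. -/
open Matrix

/-- The hat map `[·]^×` sending `x ∈ ℝ³` to the skew-symmetric matrix with `[x]^× y = x × y`. -/
noncomputable def hat (x : Fin 3 → ℝ) : Matrix (Fin 3) (Fin 3) ℝ :=
  !![0, -x 2, x 1; x 2, 0, -x 0; -x 1, x 0, 0]

/-- The inverse of the hat map (on skew-symmetric matrices). -/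
noncomputable def vex (C : Matrix (Fin 3) (Fin 3) ℝ) : Fin 3 → ℝ :=
  ![C 2 1, C 0 2, C 1 0]

/-- The skew-symmetric projection `P_a(C) = (C - Cᵀ)/2`. -/
noncomputable def Pa (C : Matrix (Fin 3) (Fin 3) ℝ) : Matrix (Fin 3) (Fin 3) ℝ :=
  (1/2 : ℝ) • (C - Cᵀ)

/-- `ψ = vex ∘ P_a`. -/
noncomputable def psi (C : Matrix (Fin 3) (Fin 3) ℝ) : Fin 3 → ℝ :=
  vex (Pa C)

/-- Membership in `SO(3)`. -/
def IsSO3 (R : Matrix (Fin 3) (Fin 3) ℝ) : Prop :=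
  Rᵀ * R = 1 ∧ R.det = 1

/-- Angle-axis (Rodrigues) parameterization `R(θ,u)`. -/
noncomputable def rodrigues (θ : ℝ) (u : Fin 3 → ℝ) : Matrix (Fin 3) (Fin 3) ℝ :=
  1 + Real.sin θ • hat u + (1 - Real.cos θ) • (hat u * hat u)

/-- For symmetric positive definite `A` and `R ∈ SO(3)`, `tr(A(I₃ - R)) ≥ 0`,
with equality iff `R = I₃`. -/
theorem weighted_trace_nonneg (A R : Matrix (Fin 3) (Fin 3) ℝ)
    (hA : A.PosDef) (hR : IsSO3 R) :
    0 ≤ (A * ((1 : Matrix (Fin 3) (Fin 3) ℝ) - R)).trace ∧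
      ((A * ((1 : Matrix (Fin 3) (Fin 3) ℝ) - R)).trace = 0 ↔ R = 1) := by
  obtain ⟨hRo, _⟩ := hR
  set M := (1 : Matrix (Fin 3) (Fin 3) ℝ) - R with hM
  have hAt : Aᵀ = A := hA.1.eq
  have h1 : Mᵀ * M = M + Mᵀ := by
    have : Mᵀ * M = 1 - R - Rᵀ + Rᵀ * R := by
      simp only [hM, transpose_sub, transpose_one, sub_mul, mul_sub, mul_one, one_mul]
      abel
    rw [this, hRo, hM]
    simp only [transpose_sub, transpose_one]
    abel
  have h2 : (A * Mᵀ).trace = (A * M).trace := by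
    rw [← trace_transpose (A * Mᵀ), transpose_mul, transpose_transpose, hAt, trace_mul_comm]
  have key : (A * M).trace + (A * M).trace = (M * A * Mᵀ).trace := by
    have : (M * A * Mᵀ).trace = (A * (Mᵀ * M)).trace := by
      rw [Matrix.mul_assoc, trace_mul_comm, Matrix.mul_assoc]
    rw [this, h1, Matrix.mul_add, trace_add, h2]
  have hdiag : (M * A * Mᵀ).trace = ∑ i, (M i) ⬝ᵥ (A *ᵥ (M i)) := by
    simp [Matrix.trace, Matrix.diag, Matrix.mul_apply, dotProduct, Matrix.mulVec,
      Finset.mul_sum, Finset.sum_mul, Fin.sum_univ_three]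
    ring
  have hnn : ∀ x : Fin 3 → ℝ, 0 ≤ x ⬝ᵥ A *ᵥ x := by
    intro x
    rcases eq_or_ne x 0 with h | h
    · simp [h]
    · have := hA.dotProduct_mulVec_pos h; simpa using this.le
  have hsum : 0 ≤ ∑ i, (M i) ⬝ᵥ (A *ᵥ (M i)) :=
    Finset.sum_nonneg fun i _ => hnn _
  have hnonneg : 0 ≤ (A * M).trace := by nlinarith [key, hdiag]
  refine ⟨hnonneg, ?_, ?_⟩
  · intro h
    have hsum0 : ∑ i, (M i) ⬝ᵥ (A *ᵥ (M i)) = 0 := by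
      rw [← hdiag, ← key, h]; ring
    have hz : ∀ i : Fin 3, M i = 0 := by
      intro i
      by_contra hi
      have hpos := hA.dotProduct_mulVec_pos hi
      have : (M i) ⬝ᵥ (A *ᵥ (M i)) = 0 :=
        (Finset.sum_eq_zero_iff_of_nonneg (fun j _ => hnn _)).mp hsum0 i (Finset.mem_univ i)
      simp only [star_trivial] at hpos
      linarith
    have hM0 : M = 0 := funext hz
    rw [hM] at hM0
    exact (sub_eq_zero.mp hM0).symm
  · intro h
    simp [hM, h]
end

section
/- Let J ∈ ℝ^{n×n} be symmetric positive definite, D ∈ ℝ^{n×n} symmetric positive definite, H ∈ ℝ^{n×m} of full column rank, S ∈ ℝ^{m×m} symmetric, and k > 0. Then the matrix M = [[0, Hᵀ], [-(k/2) J⁻¹ H S, -J⁻¹ D]] has no purely imaginary nonzero eigenvalues: if M z = iλ z with λ ∈ ℝ \ {0} and z = (z₁, z₂), then z = 0. -/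
open Matrix

lemma sym_dot_im (n : ℕ) (M : Matrix (Fin n) (Fin n) ℝ) (hM : ∀ i j, M j i = M i j)
    (v : Fin n → ℂ) :
    (star v ⬝ᵥ ((M.map Complex.ofReal) *ᵥ v)).im = 0 := by
  rw [← Complex.conj_eq_iff_im]
  simp only [dotProduct, mulVec, Matrix.map_apply, Pi.star_apply, Finset.mul_sum, map_sum,
    _root_.map_mul, Complex.star_def, Complex.conj_conj, Complex.conj_ofReal, RingHom.coe_coe]
  rw [Finset.sum_comm]
  refine Finset.sum_congr rfl fun i _ => Finset.sum_congr rfl fun j _ => ?_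
  rw [hM i j]
  ring

lemma dot_re_eq (n : ℕ) (M : Matrix (Fin n) (Fin n) ℝ) (v : Fin n → ℂ) :
    (star v ⬝ᵥ ((M.map Complex.ofReal) *ᵥ v)).re
      = (fun i => (v i).re) ⬝ᵥ (M *ᵥ (fun i => (v i).re))
        + (fun i => (v i).im) ⬝ᵥ (M *ᵥ (fun i => (v i).im)) := by
  simp only [dotProduct, mulVec, Matrix.map_apply, Pi.star_apply, Finset.mul_sum,
    Complex.re_sum, Finset.mul_sum, ← Finset.sum_add_distrib]
  refine Finset.sum_congr rfl fun i _ => Finset.sum_congr rfl fun j _ => ?_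
  simp only [Complex.mul_re, Complex.mul_im, Complex.star_def, Complex.conj_re, Complex.conj_im,
    Complex.ofReal_re, Complex.ofReal_im]
  ring

lemma posdef_map_re (n : ℕ) (M : Matrix (Fin n) (Fin n) ℝ) (hM : M.PosDef)
    (v : Fin n → ℂ) (hv : v ≠ 0) :
    0 < (star v ⬝ᵥ ((M.map Complex.ofReal) *ᵥ v)).re := by
  rw [dot_re_eq]
  set a : Fin n → ℝ := fun i => (v i).re with ha
  set b : Fin n → ℝ := fun i => (v i).im with hb
  have key : ∀ w : Fin n → ℝ, 0 ≤ w ⬝ᵥ (M *ᵥ w) := fun w => by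
    rcases eq_or_ne w 0 with h | h
    · simp [h]
    · exact le_of_lt (by simpa using hM.dotProduct_mulVec_pos h)
  rcases eq_or_ne a 0 with h1 | h1
  · have h2 : b ≠ 0 := by
      intro h2
      apply hv
      funext i
      exact Complex.ext (by simpa using congrFun h1 i) (by simpa using congrFun h2 i)
    have hb' : 0 < b ⬝ᵥ (M *ᵥ b) := by simpa using hM.dotProduct_mulVec_pos h2
    linarith [key a]
  · have ha' : 0 < a ⬝ᵥ (M *ᵥ a) := by simpa using hM.dotProduct_mulVec_pos h1
    linarith [key b]

/-- The block matrix `M = [[0, Hᵀ], [-(k/2) J⁻¹ H S, -J⁻¹ D]]` has no purely imaginary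
nonzero eigenvalues: any (complex) eigenvector for eigenvalue `iλ`, `λ ∈ ℝ \ {0}`, is zero. -/
theorem block_jacobian_no_imaginary_eigenvalues (n m : ℕ)
    (J D : Matrix (Fin n) (Fin n) ℝ) (hJ : J.PosDef) (hD : D.PosDef)
    (H : Matrix (Fin n) (Fin m) ℝ) (hH : LinearIndependent ℝ (fun k i => H i k))
    (S : Matrix (Fin m) (Fin m) ℝ) (hS : Sᵀ = S)
    (k : ℝ) (hk : 0 < k) (lam : ℝ) (hlam : lam ≠ 0)
    (z : (Fin m ⊕ Fin n) → ℂ)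
    (hz : ((fromBlocks 0 Hᵀ (-((k/2) • (J⁻¹ * H * S))) (-(J⁻¹ * D))).map
        (Complex.ofReal)) *ᵥ z = (Complex.I * lam) • z) :
    z = 0 := by
  have hcoe : (Complex.ofReal : ℝ → ℂ) = ⇑Complex.ofRealHom := rfl
  set RC : ℝ →+* ℂ := Complex.ofRealHom with hRCdef
  set μ : ℂ := Complex.I * (lam : ℂ) with hμ
  have hμ0 : μ ≠ 0 := mul_ne_zero Complex.I_ne_zero (Complex.ofReal_ne_zero.mpr hlam)
  set x : Fin m → ℂ := z ∘ Sum.inl with hxdef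
  set y : Fin n → ℂ := z ∘ Sum.inr with hydef
  have hzel : z = Sum.elim x y := by funext i; cases i <;> rfl
  rw [hzel, Matrix.fromBlocks_map, Matrix.fromBlocks_mulVec] at hz
  -- map helper lemmas
  have mneg : ∀ {p q : ℕ} (A : Matrix (Fin p) (Fin q) ℝ),
      (-A).map ⇑RC = -(A.map ⇑RC) := by
    intro p q A; ext i j; simp [Matrix.map_apply]
  have msmul : ∀ {p q : ℕ} (r : ℝ) (A : Matrix (Fin p) (Fin q) ℝ),
      (r • A).map ⇑RC = r • (A.map ⇑RC) := by
    intro p q r A; ext i j; simp [Matrix.map_apply, Matrix.smul_apply, smul_eq_mul, Complex.real_smul, hRCdef]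
  have h0map : ((0 : Matrix (Fin m) (Fin m) ℝ)).map ⇑RC = 0 :=
    Matrix.map_zero _ (map_zero RC)
  set Jc : Matrix (Fin n) (Fin n) ℂ := J.map ⇑RC with hJc
  set Ji : Matrix (Fin n) (Fin n) ℂ := (J⁻¹).map ⇑RC with hJi
  set Dc : Matrix (Fin n) (Fin n) ℂ := D.map ⇑RC with hDc
  set Hc : Matrix (Fin n) (Fin m) ℂ := H.map ⇑RC with hHc
  set Sc : Matrix (Fin m) (Fin m) ℂ := S.map ⇑RC with hSc
  -- extract the two block equations
  have e1 : Hcᵀ *ᵥ y = μ • x := by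
    funext i
    have := congrFun hz (Sum.inl i)
    simpa [hcoe, h0map, Matrix.transpose_map] using this
  have e2 : -((k/2 : ℝ) • ((Ji * Hc * Sc) *ᵥ x)) + -((Ji * Dc) *ᵥ y) = μ • y := by
    have e2' : ((-((k/2 : ℝ) • (J⁻¹ * H * S))).map ⇑RC) *ᵥ x
        + ((-(J⁻¹ * D)).map ⇑RC) *ᵥ y = μ • y := by
      funext i
      have := congrFun hz (Sum.inr i)
      simpa [hcoe] using this
    rw [mneg, msmul, Matrix.map_mul, Matrix.map_mul, mneg, Matrix.map_mul] at e2'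
    rw [← e2', neg_mulVec, neg_mulVec, smul_mulVec]
  -- multiply the second equation by Jc
  have hJcJi : Jc * Ji = 1 := by
    rw [hJc, hJi, ← Matrix.map_mul,
      Matrix.mul_nonsing_inv J (isUnit_iff_ne_zero.mpr hJ.det_pos.ne'),
      Matrix.map_one _ (map_zero RC) (map_one RC)]
  have hJHS : Jc * (Ji * Hc * Sc) = Hc * Sc := by
    rw [Matrix.mul_assoc Ji Hc Sc, ← Matrix.mul_assoc, hJcJi, Matrix.one_mul]
  have hJD : Jc * (Ji * Dc) = Dc := by rw [← Matrix.mul_assoc, hJcJi, Matrix.one_mul]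
  have e3 : -((k/2 : ℝ) • ((Hc * Sc) *ᵥ x)) + -(Dc *ᵥ y) = μ • (Jc *ᵥ y) := by
    have := congrArg (fun v => Jc *ᵥ v) e2
    simpa only [mulVec_add, mulVec_neg, mulVec_smul, mulVec_mulVec, hJHS, hJD] using this
  -- dot with star y
  have e4 := congrArg (fun v => star y ⬝ᵥ v) e3
  simp only [dotProduct_add, dotProduct_neg, dotProduct_smul] at e4
  -- compute star y ⬝ᵥ (Hc * Sc) *ᵥ x
  have hH1 : (Hcᵀ)ᴴ = Hc := by
    ext i j
    simp [conjTranspose_apply, hHc, Matrix.map_apply, hRCdef, Complex.conj_ofReal]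
  have hvm : star y ᵥ* Hc = (-μ) • star x := by
    rw [← hH1, ← star_mulVec, e1, star_smul]
    congr 1
    simp [hμ, Complex.ext_iff]
  have hc : star y ⬝ᵥ ((Hc * Sc) *ᵥ x) = (-μ) * (star x ⬝ᵥ (Sc *ᵥ x)) := by
    rw [← mulVec_mulVec, dotProduct_mulVec, hvm, smul_dotProduct, smul_eq_mul]
  rw [hc] at e4
  set a : ℂ := star x ⬝ᵥ (Sc *ᵥ x) with hadef
  set d : ℂ := star y ⬝ᵥ (Dc *ᵥ y) with hddef
  set j : ℂ := star y ⬝ᵥ (Jc *ᵥ y) with hjdef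
  -- realness facts
  have hSsym : ∀ i j, S j i = S i j := by
    intro i j
    have := congrFun (congrFun hS i) j
    simpa [Matrix.transpose_apply] using this
  have hJsym : ∀ i j, J j i = J i j := by
    intro i j
    have := congrFun (congrFun hJ.1 i) j
    simpa [Matrix.conjTranspose_apply] using this
  have haim : a.im = 0 := sym_dot_im m S hSsym x
  have hjim : j.im = 0 := sym_dot_im n J hJsym y
  -- take real parts
  have e5 := congrArg Complex.re e4
  simp [Complex.add_re, Complex.neg_re, Complex.real_smul, smul_eq_mul, Complex.mul_re,
    Complex.mul_im, Complex.ofReal_re, Complex.ofReal_im, Complex.neg_im, hμ, Complex.I_re,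
    Complex.I_im, haim, hjim] at e5
  have hdre : d.re = 0 := by nlinarith [e5]
  have hy0 : y = 0 := by
    by_contra hy
    have := posdef_map_re n D hD y hy
    rw [hcoe, ← hDc, ← hddef] at this
    linarith
  have hx0 : x = 0 := by
    funext i
    have := congrFun e1 i
    rw [hy0] at this
    simp only [mulVec_zero] at this
    have : μ * x i = 0 := by simpa [Pi.smul_apply, smul_eq_mul] using this.symm
    exact (mul_eq_zero.mp this).resolve_left hμ0
  rw [hzel, hx0, hy0]
  funext i
  cases i <;> rfl
end

section
/- Let A ∈ ℝ^{3×3} be symmetric, u ∈ ℝ³ a unit vector, γ > 0, and define U(R, ξ) := tr(A(I₃ - R·R(ξ,u))) + (γ/2) ξ² for R ∈ SO(3) and ξ ∈ ℝ, where R(ξ,u) is the Rodrigues rotation by angle ξ about axis u. Then U(I₃, 0) = 0, and if A is positive definite then U(R, ξ) > 0 for all (R, ξ) ≠ (I₃, 0). -/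
open Matrix

lemma hatT (u : Fin 3 → ℝ) : (hat u)ᵀ = -hat u := by
  ext i j
  fin_cases i <;> fin_cases j <;> simp [hat]

lemma hatK3 (u : Fin 3 → ℝ) (h1 : u 0 ^ 2 + u 1 ^ 2 + u 2 ^ 2 = 1) :
    hat u * (hat u * hat u) = -hat u := by
  ext i j
  fin_cases i <;> fin_cases j <;>
  · simp [hat, Matrix.mul_apply, Fin.sum_univ_three]
    first
    | linear_combination (u 0) * h1
    | linear_combination (-(u 0)) * h1
    | linear_combination (u 1) * h1
    | linear_combination (-(u 1)) * h1
    | linear_combination (u 2) * h1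
    | linear_combination (-(u 2)) * h1
    | ring

lemma rod_orth (θ : ℝ) (u : Fin 3 → ℝ) (hu : u ⬝ᵥ u = 1) :
    (rodrigues θ u)ᵀ * rodrigues θ u = 1 := by
  have h1 : u 0 ^ 2 + u 1 ^ 2 + u 2 ^ 2 = 1 := by
    simpa [dotProduct, Fin.sum_univ_three, sq] using hu
  have hs : Real.sin θ ^ 2 + Real.cos θ ^ 2 = 1 := Real.sin_sq_add_cos_sq θ
  set s := Real.sin θ with hsdef
  set c := Real.cos θ with hcdef
  set K := hat u with hKdef
  have hK3 : K * (K * K) = -K := hatK3 u h1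
  have hK4 : (K * K) * (K * K) = -(K * K) := by
    rw [← mul_assoc, mul_assoc K K K, hK3, neg_mul]
  have hT : (rodrigues θ u)ᵀ = 1 - s • K + (1 - c) • (K * K) := by
    have hKT : Kᵀ = -K := by rw [hKdef]; exact hatT u
    rw [rodrigues]
    simp only [Matrix.transpose_add, Matrix.transpose_one, Matrix.transpose_smul,
      Matrix.transpose_mul, ← hKdef, ← hsdef, ← hcdef, hKT, neg_mul_neg, smul_neg]
    module
  rw [hT, rodrigues, ← hKdef, ← hsdef, ← hcdef]
  have expand : (1 - s • K + (1 - c) • (K * K)) * (1 + s • K + (1 - c) • (K * K)) =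
      1 + (2 * (1 - c)) • (K * K) - (s * s) • (K * K)
        - (s * (1 - c)) • (K * (K * K)) + ((1 - c) * s) • (K * (K * K))
        + ((1 - c) * (1 - c)) • ((K * K) * (K * K)) := by
    simp only [mul_add, add_mul, sub_mul, mul_sub, one_mul, mul_one,
      smul_mul_smul_comm, smul_mul_assoc, mul_smul_comm, mul_assoc]
    module
  rw [expand, hK3, hK4]
  have hcoef : 1 + (2 * (1 - c)) • (K * K) - (s * s) • (K * K) - (s * (1 - c)) • (-K)
        + ((1 - c) * s) • (-K) + ((1 - c) * (1 - c)) • (-(K * K))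
      = 1 + (2 * (1 - c) - s * s - (1 - c) * (1 - c)) • (K * K) := by
    module
  rw [hcoef]
  have : 2 * (1 - c) - s * s - (1 - c) * (1 - c) = 0 := by nlinarith [hs]
  rw [this, zero_smul, add_zero]

/-- For a positive definite `A`, `tr(Mᵀ A M) ≥ 0` with equality iff `M = 0`. -/
lemma trace_quad_nonneg (A : Matrix (Fin 3) (Fin 3) ℝ) (hA : A.PosDef)
    (M : Matrix (Fin 3) (Fin 3) ℝ) :
    0 ≤ (Mᵀ * A * M).trace ∧ ((Mᵀ * A * M).trace = 0 → M = 0) := by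
  have entry : ∀ j, (Mᵀ * A * M) j j = (fun i => M i j) ⬝ᵥ (A *ᵥ fun i => M i j) := by
    intro j
    simp only [Matrix.mul_apply, Matrix.transpose_apply, Matrix.mulVec, dotProduct,
      Finset.sum_mul, Finset.mul_sum]
    rw [Finset.sum_comm]
    exact Finset.sum_congr rfl fun i _ => Finset.sum_congr rfl fun k _ => by ring
  have htr : (Mᵀ * A * M).trace = ∑ j, (fun i => M i j) ⬝ᵥ (A *ᵥ fun i => M i j) := by
    rw [Matrix.trace]
    exact Finset.sum_congr rfl fun j _ => entry j
  have hnn : ∀ j : Fin 3, 0 ≤ (fun i => M i j) ⬝ᵥ (A *ᵥ fun i => M i j) := by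
    intro j
    have := hA.posSemidef.dotProduct_mulVec_nonneg (fun i => M i j)
    simpa using this
  constructor
  · rw [htr]
    exact Finset.sum_nonneg fun j _ => hnn j
  · intro h0
    rw [htr] at h0
    have hz : ∀ j : Fin 3, (fun i => M i j) ⬝ᵥ (A *ᵥ fun i => M i j) = 0 := by
      intro j
      have := (Finset.sum_eq_zero_iff_of_nonneg (fun j _ => hnn j)).mp h0
      exact this j (Finset.mem_univ j)
    ext i j
    by_contra hij
    have hcol : (fun i => M i j) ≠ 0 := by
      intro hcontra
      exact hij (by simpa using congrFun hcontra i)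
    have := hA.dotProduct_mulVec_pos hcol
    simp only [star_trivial] at this
    rw [hz j] at this
    exact lt_irrefl 0 this

/-- For a positive definite symmetric `A` and orthogonal `Q`,
`tr(A(1-Q)) ≥ 0` with equality iff `Q = 1`. -/
lemma trace_pot (A Q : Matrix (Fin 3) (Fin 3) ℝ) (hA : Aᵀ = A) (hAp : A.PosDef)
    (hQ : Qᵀ * Q = 1) :
    0 ≤ (A * (1 - Q)).trace ∧ ((A * (1 - Q)).trace = 0 → Q = 1) := by
  have hQQT : Q * Qᵀ = 1 := mul_eq_one_comm.mp hQ
  have e1 : (Qᵀ * A * Q).trace = A.trace := by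
    rw [Matrix.trace_mul_cycle, hQQT, Matrix.one_mul]
  have e2 : (Qᵀ * A).trace = (A * Q).trace := by
    rw [← Matrix.trace_transpose (Qᵀ * A), Matrix.transpose_mul, Matrix.transpose_transpose, hA]
  have hexp : (1 - Q)ᵀ * A * (1 - Q) = A - A * Q - Qᵀ * A + Qᵀ * A * Q := by
    rw [Matrix.transpose_sub, Matrix.transpose_one]
    noncomm_ring
  have hid : ((1 - Q)ᵀ * A * (1 - Q)).trace = 2 * (A * (1 - Q)).trace := by
    rw [hexp]
    rw [Matrix.trace_add, Matrix.trace_sub, Matrix.trace_sub, e1, e2,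
      Matrix.mul_sub, Matrix.mul_one, Matrix.trace_sub]
    ring
  obtain ⟨h1, h2⟩ := trace_quad_nonneg A hAp (1 - Q)
  constructor
  · nlinarith [h1, hid]
  · intro h0
    have : ((1 - Q)ᵀ * A * (1 - Q)).trace = 0 := by rw [hid, h0]; ring
    exact (sub_eq_zero.mp (h2 this)).symm

/-- The parameterized potential `U(R,ξ) = tr(A(I₃ - R·R(ξ,u))) + (γ/2)ξ²` vanishes at
`(I₃, 0)` and, when `A` is positive definite, is strictly positive elsewhere on `SO(3) × ℝ`. -/
theorem parameterized_potential_positive (A : Matrix (Fin 3) (Fin 3) ℝ) (hA : Aᵀ = A)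
    (u : Fin 3 → ℝ) (hu : u ⬝ᵥ u = 1) (γ : ℝ) (hγ : 0 < γ) :
    let U : Matrix (Fin 3) (Fin 3) ℝ → ℝ → ℝ := fun R ξ =>
      (A * ((1 : Matrix (Fin 3) (Fin 3) ℝ) - R * rodrigues ξ u)).trace + γ / 2 * ξ ^ 2
    U 1 0 = 0 ∧
      (A.PosDef → ∀ (R : Matrix (Fin 3) (Fin 3) ℝ) (ξ : ℝ), IsSO3 R →
        (R, ξ) ≠ (1, 0) → 0 < U R ξ) := by
  intro U
  have hrod0 : rodrigues 0 u = 1 := by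
    simp [rodrigues]
  constructor
  · show (A * ((1 : Matrix (Fin 3) (Fin 3) ℝ) - 1 * rodrigues 0 u)).trace + γ / 2 * 0 ^ 2 = 0
    rw [hrod0]
    simp
  · intro hAp R ξ hR hne
    show 0 < (A * ((1 : Matrix (Fin 3) (Fin 3) ℝ) - R * rodrigues ξ u)).trace + γ / 2 * ξ ^ 2
    set Q := R * rodrigues ξ u with hQdef
    have hQ : Qᵀ * Q = 1 := by
      rw [hQdef, Matrix.transpose_mul, Matrix.mul_assoc, ← Matrix.mul_assoc Rᵀ R,
        hR.1, Matrix.one_mul, rod_orth ξ u hu]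
    obtain ⟨h1, h2⟩ := trace_pot A Q hA hAp hQ
    rcases eq_or_ne ξ 0 with hξ | hξ
    · subst hξ
      have hRne : R ≠ 1 := by
        intro hcontra
        exact hne (by rw [hcontra])
      have hQR : Q = R := by rw [hQdef, hrod0, Matrix.mul_one]
      have htrpos : 0 < (A * (1 - Q)).trace := by
        rcases lt_or_eq_of_le h1 with h | h
        · exact h
        · exact absurd (hQR ▸ h2 h.symm) hRne
      nlinarith [htrpos]
    · have : 0 < γ / 2 * ξ ^ 2 := by positivity
      nlinarith [h1, this]
end
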